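/- arXiv:1312.1429 — 6 statements merged into one kernel-verified Lean document; each statement's English description precedes it below -/
import Mathlib

section
/- Let G be a finite abelian group with G = G₁ × G₂ where |G₁| = p₁^α₁, |G₂| = p₂^α₂ for distinct primes p₁, p₂. Then the number of diamonds in the subgroup lattice of G equals dm(G₁)·|L(G₂)| + dm(G₂)·|L(G₁)| + 6·dm(G₁)·dm(G₂), where |L(H)| denotes the number of subgroups of H. -/
/-- `(A,B,C)` form a diamond: pairwise distinct subgroups with equal pairwise
meets and equal pairwise joins. -/
def IsDiamondTriple {G : Type*} [AddGroup G] (A B C : AddSubgroup G) : Prop :=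
  A ≠ B ∧ A ≠ C ∧ B ≠ C ∧
    A ⊓ B = B ⊓ C ∧ B ⊓ C = C ⊓ A ∧
    A ⊔ B = B ⊔ C ∧ B ⊔ C = C ⊔ A

/-- The number of (unordered) diamonds in the subgroup lattice of `G`. -/
noncomputable def dm (G : Type*) [AddGroup G] : ℕ :=
  Set.ncard {T : Set (AddSubgroup G) | ∃ A B C : AddSubgroup G,
    T = {A, B, C} ∧ IsDiamondTriple A B C}

/-!
If `|G₁|` and `|G₂|` are coprime, every subgroup of `G₁ × G₂` is the product of its two
projections (a CRT multiple of `(a, b)` is `(a, 0)`), so `L(G₁ × G₂) ≅ L(G₁) × L(G₂)`.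
In a product of lattices a triple is a diamond iff each coordinate triple is constant or a
diamond, but not both constant. Counting ordered diamonds, six per diamond, the three cases
give `6 dm(G₁) |L(G₂)|`, `6 dm(G₂) |L(G₁)|` and `6 dm(G₁) · 6 dm(G₂)`; divide by 6.
-/

section Lattice

variable {L : Type*} [Lattice L]

def EqualMeetsJoins (A B C : L) : Prop :=
  A ⊓ B = B ⊓ C ∧ B ⊓ C = C ⊓ A ∧ A ⊔ B = B ⊔ C ∧ B ⊔ C = C ⊔ A

-- Spelled out exactly like `IsDiamondTriple`, so that `dm G = diamondCount (AddSubgroup G)`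
-- holds by `rfl`.
def IsDiamond (A B C : L) : Prop :=
  A ≠ B ∧ A ≠ C ∧ B ≠ C ∧
    A ⊓ B = B ⊓ C ∧ B ⊓ C = C ⊓ A ∧
    A ⊔ B = B ⊔ C ∧ B ⊔ C = C ⊔ A

theorem isDiamond_iff {A B C : L} :
    IsDiamond A B C ↔ (A ≠ B ∧ A ≠ C ∧ B ≠ C) ∧ EqualMeetsJoins A B C := by
  simp only [IsDiamond, EqualMeetsJoins, and_assoc]

namespace EqualMeetsJoins

variable {A B C : L}

theorem swap₁₂ (h : EqualMeetsJoins A B C) : EqualMeetsJoins B A C := by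
  unfold EqualMeetsJoins at *
  grind [inf_comm, sup_comm]

theorem swap₂₃ (h : EqualMeetsJoins A B C) : EqualMeetsJoins A C B := by
  unfold EqualMeetsJoins at *
  grind [inf_comm, sup_comm]

theorem of_eq (hAB : A = B) (hBC : B = C) : EqualMeetsJoins A B C := by
  subst hAB hBC; exact ⟨rfl, rfl, rfl, rfl⟩

theorem eq_of_left_eq (h : EqualMeetsJoins A B C) (hAB : A = B) : B = C := by
  subst hAB
  exact le_antisymm (inf_eq_left.mp (h.1.symm.trans (inf_idem A)))
    (sup_eq_left.mp (h.2.2.1.symm.trans (sup_idem A)))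

theorem eq_or_pairwise_ne (h : EqualMeetsJoins A B C) :
    (A = B ∧ B = C) ∨ (A ≠ B ∧ A ≠ C ∧ B ≠ C) := by
  by_cases hAB : A = B
  · exact .inl ⟨hAB, h.eq_of_left_eq hAB⟩
  by_cases hAC : A = C
  · exact absurd (hAC.trans (h.swap₂₃.eq_of_left_eq hAC)) hAB
  by_cases hBC : B = C
  · exact absurd (hBC.trans (h.swap₁₂.swap₂₃.eq_of_left_eq hBC)).symm hAB
  exact .inr ⟨hAB, hAC, hBC⟩

end EqualMeetsJoins

namespace IsDiamond

variable {A B C : L}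

theorem swap₁₂ (h : IsDiamond A B C) : IsDiamond B A C := by
  obtain ⟨⟨hAB, hAC, hBC⟩, h⟩ := isDiamond_iff.mp h
  exact isDiamond_iff.mpr ⟨⟨hAB.symm, hBC, hAC⟩, h.swap₁₂⟩

theorem swap₂₃ (h : IsDiamond A B C) : IsDiamond A C B := by
  obtain ⟨⟨hAB, hAC, hBC⟩, h⟩ := isDiamond_iff.mp h
  exact isDiamond_iff.mpr ⟨⟨hAC, hAB, hBC.symm⟩, h.swap₂₃⟩

end IsDiamond

end Lattice

section Counting

variable (L : Type*) [Lattice L]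

def orderedDiamonds : Set (L × L × L) := {t | IsDiamond t.1 t.2.1 t.2.2}

def diamonds : Set (Set L) := {T | ∃ A B C : L, T = {A, B, C} ∧ IsDiamond A B C}

noncomputable def diamondCount : ℕ := (diamonds L).ncard

end Counting

section Orderings

variable {α : Type*}

def orderings (A B C : α) : Set (α × α × α) :=
  {(A, B, C), (A, C, B), (B, A, C), (B, C, A), (C, A, B), (C, B, A)}

theorem ncard_orderings {A B C : α} (hAB : A ≠ B) (hAC : A ≠ C) (hBC : B ≠ C) :
    (orderings A B C).ncard = 6 := by
  classical
  rw [orderings, Set.ncard_eq_toFinset_card']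
  simp [hAB, hAC, hBC, hAB.symm, hAC.symm, hBC.symm]

theorem mk_mem_orderings {A B C X Y Z : α} (hXY : X ≠ Y) (hXZ : X ≠ Z) (hYZ : Y ≠ Z)
    (hX : X ∈ ({A, B, C} : Set α)) (hY : Y ∈ ({A, B, C} : Set α))
    (hZ : Z ∈ ({A, B, C} : Set α)) : (X, Y, Z) ∈ orderings A B C := by
  simp only [Set.mem_insert_iff, Set.mem_singleton_iff] at hX hY hZ
  rcases hX with rfl | rfl | rfl <;> rcases hY with rfl | rfl | rfl <;>
    rcases hZ with rfl | rfl | rfl <;> simp_all [orderings]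

end Orderings

theorem Set.ncard_eq_mul_of_ncard_fiber {α β : Type*} {s : Set α} {t : Set β} {f : α → β}
    {n : ℕ} (hs : s.Finite) (ht : t.Finite) (hf : Set.MapsTo f s t)
    (hfib : ∀ b ∈ t, {a ∈ s | f a = b}.ncard = n) : s.ncard = n * t.ncard := by
  classical
  rw [Set.ncard_eq_toFinset_card s hs, Set.ncard_eq_toFinset_card t ht,
    Finset.card_eq_sum_card_fiberwise (f := f) (t := ht.toFinset) (by simpa using hf),
    Finset.sum_const_nat fun b hb => ?_, mul_comm]
  rw [← hfib b (by simpa using hb), Set.ncard_eq_toFinset_card _ (hs.subset fun _ h => h.1)]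
  congr 1
  ext a
  simp

section Counting

variable {L : Type*} [Lattice L]

theorem IsDiamond.orderedDiamonds_fiber {A B C : L} (h : IsDiamond A B C) :
    {t ∈ orderedDiamonds L | ({t.1, t.2.1, t.2.2} : Set L) = {A, B, C}} = orderings A B C := by
  ext ⟨X, Y, Z⟩
  constructor
  · rintro ⟨⟨hXY, hXZ, hYZ, -⟩, hT⟩
    exact mk_mem_orderings hXY hXZ hYZ (hT ▸ by simp) (hT ▸ by simp) (hT ▸ by simp)
  · simp only [orderings, Set.mem_insert_iff, Set.mem_singleton_iff, Prod.mk.injEq]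
    rintro (⟨rfl, rfl, rfl⟩ | ⟨rfl, rfl, rfl⟩ | ⟨rfl, rfl, rfl⟩ | ⟨rfl, rfl, rfl⟩ |
      ⟨rfl, rfl, rfl⟩ | ⟨rfl, rfl, rfl⟩)
    all_goals refine ⟨?_, Set.ext fun _ => by
      simp only [Set.mem_insert_iff, Set.mem_singleton_iff, or_comm, or_left_comm]⟩
    exacts [h, h.swap₂₃, h.swap₁₂, h.swap₁₂.swap₂₃, h.swap₂₃.swap₁₂, h.swap₂₃.swap₁₂.swap₂₃]

theorem ncard_orderedDiamonds [Finite L] : (orderedDiamonds L).ncard = 6 * diamondCount L := by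
  refine Set.ncard_eq_mul_of_ncard_fiber (f := fun t => {t.1, t.2.1, t.2.2})
    (Set.toFinite _) (Set.toFinite _) (fun t ht => ⟨t.1, t.2.1, t.2.2, rfl, ht⟩) ?_
  rintro _ ⟨A, B, C, rfl, h⟩
  rw [h.orderedDiamonds_fiber, ncard_orderings h.1 h.2.1 h.2.2.1]

end Counting

theorem OrderIso.isDiamond_apply_iff {α β : Type*} [Lattice α] [Lattice β] (e : α ≃o β)
    {A B C : α} : IsDiamond (e A) (e B) (e C) ↔ IsDiamond A B C := by
  simp only [IsDiamond, ← map_inf, ← map_sup, e.injective.ne_iff, e.injective.eq_iff]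

theorem diamondCount_congr {α β : Type*} [Lattice α] [Lattice β] [Finite α] [Finite β]
    (e : α ≃o β) : diamondCount α = diamondCount β := by
  let e₃ : α × α × α ≃ β × β × β := e.toEquiv.prodCongr (e.toEquiv.prodCongr e.toEquiv)
  have he : orderedDiamonds α = e₃ ⁻¹' orderedDiamonds β := by
    ext t
    exact e.isDiamond_apply_iff.symm
  apply Nat.eq_of_mul_eq_mul_left (show 0 < 6 by norm_num)
  rw [← ncard_orderedDiamonds, ← ncard_orderedDiamonds, he,
    Set.ncard_preimage_of_injective_subset_range e₃.injective (by simp)]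

def constTriples (α : Type*) : Set (α × α × α) := {t | t.1 = t.2.1 ∧ t.2.1 = t.2.2}

theorem ncard_constTriples {α : Type*} : (constTriples α).ncard = Nat.card α := by
  have hrange : constTriples α = Set.range fun a => (a, a, a) := by
    ext ⟨a, b, c⟩
    aesop (add simp constTriples)
  rw [hrange, Set.ncard_range_of_injective fun a b h => congrArg Prod.fst h]

def tripleProdEquiv {α β : Type*} :
    (α × β) × (α × β) × (α × β) ≃ (α × α × α) × (β × β × β) where
  toFun t := ((t.1.1, t.2.1.1, t.2.2.1), (t.1.2, t.2.1.2, t.2.2.2))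
  invFun s := ((s.1.1, s.2.1), (s.1.2.1, s.2.2.1), (s.1.2.2, s.2.2.2))
  left_inv _ := rfl
  right_inv _ := rfl

section Prod

variable {α β : Type*} [Lattice α] [Lattice β]

theorem equalMeetsJoins_prod_iff {x y z : α × β} :
    EqualMeetsJoins x y z ↔ EqualMeetsJoins x.1 y.1 z.1 ∧ EqualMeetsJoins x.2 y.2 z.2 := by
  simp only [EqualMeetsJoins, Prod.ext_iff, Prod.fst_inf, Prod.snd_inf, Prod.fst_sup,
    Prod.snd_sup]
  tauto

theorem isDiamond_prod_iff {x y z : α × β} :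
    IsDiamond x y z ↔
      (IsDiamond x.1 y.1 z.1 ∧ x.2 = y.2 ∧ y.2 = z.2) ∨
      ((x.1 = y.1 ∧ y.1 = z.1) ∧ IsDiamond x.2 y.2 z.2) ∨
      (IsDiamond x.1 y.1 z.1 ∧ IsDiamond x.2 y.2 z.2) := by
  simp only [isDiamond_iff, equalMeetsJoins_prod_iff]
  constructor
  · rintro ⟨hne, h₁, h₂⟩
    rcases h₁.eq_or_pairwise_ne with e₁ | n₁ <;> rcases h₂.eq_or_pairwise_ne with e₂ | n₂
    · exact absurd (Prod.ext e₁.1 e₂.1) hne.1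
    all_goals tauto
  · have fst : ∀ {a b : α × β}, a.1 ≠ b.1 → a ≠ b := ne_of_apply_ne _
    have snd : ∀ {a b : α × β}, a.2 ≠ b.2 → a ≠ b := ne_of_apply_ne _
    rintro (⟨⟨n₁, h₁⟩, e₂⟩ | ⟨e₁, n₂, h₂⟩ | ⟨⟨n₁, h₁⟩, -, h₂⟩)
    · exact ⟨⟨fst n₁.1, fst n₁.2.1, fst n₁.2.2⟩, h₁, .of_eq e₂.1 e₂.2⟩
    · exact ⟨⟨snd n₂.1, snd n₂.2.1, snd n₂.2.2⟩, .of_eq e₁.1 e₁.2, h₂⟩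
    · exact ⟨⟨fst n₁.1, fst n₁.2.1, fst n₁.2.2⟩, h₁, h₂⟩

theorem disjoint_orderedDiamonds_constTriples :
    Disjoint (orderedDiamonds α) (constTriples α) :=
  Set.disjoint_left.mpr fun _ h h' => h.1 h'.1

theorem orderedDiamonds_prod :
    orderedDiamonds (α × β) = tripleProdEquiv ⁻¹'
      (orderedDiamonds α ×ˢ constTriples β ∪ constTriples α ×ˢ orderedDiamonds β ∪
        orderedDiamonds α ×ˢ orderedDiamonds β) := by
  ext t
  exact isDiamond_prod_iff.trans or_assoc.symm

theorem ncard_orderedDiamonds_prod [Finite α] [Finite β] :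
    (orderedDiamonds (α × β)).ncard =
      (orderedDiamonds α).ncard * Nat.card β + Nat.card α * (orderedDiamonds β).ncard +
        (orderedDiamonds α).ncard * (orderedDiamonds β).ncard := by
  have hα := disjoint_orderedDiamonds_constTriples (α := α)
  have hβ := disjoint_orderedDiamonds_constTriples (α := β)
  rw [orderedDiamonds_prod, Set.ncard_preimage_of_injective_subset_range
      tripleProdEquiv.injective (by simp),
    Set.ncard_union_eq (by simp only [Set.disjoint_union_left, Set.disjoint_prod]; tauto),
    Set.ncard_union_eq (by simp only [Set.disjoint_prod]; tauto),
    Set.ncard_prod, Set.ncard_prod, Set.ncard_prod, ncard_constTriples, ncard_constTriples]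

theorem diamondCount_prod [Finite α] [Finite β] :
    diamondCount (α × β) = diamondCount α * Nat.card β + diamondCount β * Nat.card α +
      6 * diamondCount α * diamondCount β := by
  apply Nat.eq_of_mul_eq_mul_left (show 0 < 6 by norm_num)
  rw [← ncard_orderedDiamonds, ncard_orderedDiamonds_prod, ncard_orderedDiamonds,
    ncard_orderedDiamonds]
  ring

end Prod

section ProdSubgroups

variable {G₁ G₂ : Type*} [AddGroup G₁] [AddGroup G₂]

theorem exists_nsmul_prod_eq_of_coprime (hco : (Nat.card G₁).Coprime (Nat.card G₂))
    (k₁ k₂ : ℕ) : ∃ n : ℕ, ∀ x : G₁ × G₂, n • x = (k₁ • x.1, k₂ • x.2) := by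
  obtain ⟨n, h₁, h₂⟩ := Nat.chineseRemainder hco k₁ k₂
  refine ⟨n, fun x => Prod.ext ?_ ?_⟩
  · exact nsmul_eq_nsmul_iff_modEq.mpr (h₁.of_dvd (addOrderOf_dvd_natCard x.1))
  · exact nsmul_eq_nsmul_iff_modEq.mpr (h₂.of_dvd (addOrderOf_dvd_natCard x.2))

theorem AddSubgroup.prod_map_fst_map_snd_of_coprime
    (hco : (Nat.card G₁).Coprime (Nat.card G₂)) (H : AddSubgroup (G₁ × G₂)) :
    (H.map (AddMonoidHom.fst G₁ G₂)).prod (H.map (AddMonoidHom.snd G₁ G₂)) = H := by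
  obtain ⟨n₁, hn₁⟩ := exists_nsmul_prod_eq_of_coprime hco 1 0
  obtain ⟨n₂, hn₂⟩ := exists_nsmul_prod_eq_of_coprime hco 0 1
  refine le_antisymm (AddSubgroup.prod_le_iff.mpr ⟨?_, ?_⟩)
    (AddSubgroup.le_prod_iff.mpr ⟨le_rfl, le_rfl⟩)
  · rintro _ ⟨_, ⟨x, hx, rfl⟩, rfl⟩
    simpa [hn₁] using H.nsmul_mem hx n₁
  · rintro _ ⟨_, ⟨x, hx, rfl⟩, rfl⟩
    simpa [hn₂] using H.nsmul_mem hx n₂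

theorem AddSubgroup.map_fst_prod (K : AddSubgroup G₁) (L : AddSubgroup G₂) :
    (K.prod L).map (AddMonoidHom.fst G₁ G₂) = K := by
  ext a
  simp only [AddSubgroup.mem_map, AddSubgroup.mem_prod, AddMonoidHom.coe_fst]
  exact ⟨fun ⟨x, hx, hxa⟩ => hxa ▸ hx.1, fun ha => ⟨(a, 0), ⟨ha, L.zero_mem⟩, rfl⟩⟩

theorem AddSubgroup.map_snd_prod (K : AddSubgroup G₁) (L : AddSubgroup G₂) :
    (K.prod L).map (AddMonoidHom.snd G₁ G₂) = L := by
  ext b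
  simp only [AddSubgroup.mem_map, AddSubgroup.mem_prod, AddMonoidHom.coe_snd]
  exact ⟨fun ⟨x, hx, hxb⟩ => hxb ▸ hx.2, fun hb => ⟨(0, b), ⟨K.zero_mem, hb⟩, rfl⟩⟩

noncomputable def AddSubgroup.prodOrderIsoOfCoprime
    (hco : (Nat.card G₁).Coprime (Nat.card G₂)) :
    AddSubgroup (G₁ × G₂) ≃o AddSubgroup G₁ × AddSubgroup G₂ :=
  Equiv.toOrderIso
    { toFun H := (H.map (AddMonoidHom.fst G₁ G₂), H.map (AddMonoidHom.snd G₁ G₂))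
      invFun P := P.1.prod P.2
      left_inv := AddSubgroup.prod_map_fst_map_snd_of_coprime hco
      right_inv P := Prod.ext (P.1.map_fst_prod P.2) (P.1.map_snd_prod P.2) }
    (fun _ _ h => ⟨AddSubgroup.map_mono h, AddSubgroup.map_mono h⟩)
    (fun _ _ h => AddSubgroup.prod_mono h.1 h.2)

end ProdSubgroups

theorem dm_eq_diamondCount (G : Type*) [AddGroup G] : dm G = diamondCount (AddSubgroup G) :=
  rfl

theorem stmt0 (G₁ G₂ : Type*) [AddCommGroup G₁] [AddCommGroup G₂]
    [Finite G₁] [Finite G₂] (p₁ p₂ α₁ α₂ : ℕ)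
    (hp₁ : p₁.Prime) (hp₂ : p₂.Prime) (hne : p₁ ≠ p₂)
    (h₁ : Nat.card G₁ = p₁ ^ α₁) (h₂ : Nat.card G₂ = p₂ ^ α₂) :
    dm (G₁ × G₂) =
      dm G₁ * Nat.card (AddSubgroup G₂) + dm G₂ * Nat.card (AddSubgroup G₁) +
        6 * dm G₁ * dm G₂ := by
  have hco : (Nat.card G₁).Coprime (Nat.card G₂) := by
    rw [h₁, h₂]
    exact .pow _ _ ((Nat.coprime_primes hp₁ hp₂).mpr hne)
  rw [dm_eq_diamondCount, dm_eq_diamondCount, dm_eq_diamondCount,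
    diamondCount_congr (AddSubgroup.prodOrderIsoOfCoprime hco), diamondCount_prod]
end

section
/- Let G be a finite abelian p-group and let (A,B,C) be a triple of subgroups with A ⊓ B = B ⊓ C = C ⊓ A = 1 and A ⊔ B = B ⊔ C = C ⊔ A = G, with A, B, C pairwise distinct proper nontrivial subgroups. Then A ≅ B ≅ C, and G ≅ A × A. -/
/-!
A complement of a subgroup `K` of an abelian group `G` maps isomorphically onto `G ⧸ K`, so any two
complements of the same subgroup are isomorphic. In a primary diamond `A` and `B` are both
complements of `C`, and `B` and `C` are both complements of `A`; finally `G ≅ A × B ≅ A × A`.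
-/

namespace AddSubgroup

variable {G : Type*} [AddCommGroup G]

theorem nonempty_addEquiv_of_isCompl {A B C : AddSubgroup G} (hA : IsCompl C A)
    (hB : IsCompl C B) : Nonempty (A ≃+ B) :=
  ⟨((Submodule.quotientEquivOfIsCompl _ _ (toIntSubmodule.isCompl hA)).symm.trans
    (Submodule.quotientEquivOfIsCompl _ _ (toIntSubmodule.isCompl hB))).toAddEquiv⟩

noncomputable def prodAddEquivOfIsCompl {A B : AddSubgroup G} (h : IsCompl A B) : A × B ≃+ G :=
  (Submodule.prodEquivOfIsCompl _ _ (toIntSubmodule.isCompl h)).toAddEquiv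

end AddSubgroup

theorem stmt2_general (G : Type*) [AddCommGroup G] (A B C : AddSubgroup G)
    (hiAB : A ⊓ B = ⊥) (hiBC : B ⊓ C = ⊥) (hiCA : C ⊓ A = ⊥)
    (hsAB : A ⊔ B = ⊤) (hsBC : B ⊔ C = ⊤) (hsCA : C ⊔ A = ⊤) :
    Nonempty (A ≃+ B) ∧ Nonempty (B ≃+ C) ∧ Nonempty (G ≃+ A × A) := by
  have hAB : IsCompl A B := .of_eq hiAB hsAB
  have hBC : IsCompl B C := .of_eq hiBC hsBC
  have hCA : IsCompl C A := .of_eq hiCA hsCA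
  obtain ⟨eAB⟩ := AddSubgroup.nonempty_addEquiv_of_isCompl hCA hBC.symm
  obtain ⟨eBC⟩ := AddSubgroup.nonempty_addEquiv_of_isCompl hAB hCA.symm
  exact ⟨⟨eAB⟩, ⟨eBC⟩,
    ⟨(AddSubgroup.prodAddEquivOfIsCompl hAB).symm.trans ((AddEquiv.refl A).prodCongr eAB.symm)⟩⟩

theorem stmt2 (G : Type*) [AddCommGroup G] [Finite G] (p : ℕ) (hp : p.Prime)
    (hG : ∃ n : ℕ, Nat.card G = p ^ n) (A B C : AddSubgroup G)
    (hAB : A ≠ B) (hAC : A ≠ C) (hBC : B ≠ C)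
    (hAbot : A ≠ ⊥) (hBbot : B ≠ ⊥) (hCbot : C ≠ ⊥)
    (hAtop : A ≠ ⊤) (hBtop : B ≠ ⊤) (hCtop : C ≠ ⊤)
    (hiAB : A ⊓ B = ⊥) (hiBC : B ⊓ C = ⊥) (hiCA : C ⊓ A = ⊥)
    (hsAB : A ⊔ B = ⊤) (hsBC : B ⊔ C = ⊤) (hsCA : C ⊔ A = ⊤) :
    Nonempty (A ≃+ B) ∧ Nonempty (B ≃+ C) ∧ Nonempty (G ≃+ A × A) :=
  stmt2_general G A B C hiAB hiBC hiCA hsAB hsBC hsCA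
end

section
/- Let G ≅ S × S be a finite abelian p-group, with internal decomposition G = S₁ × S₂, S₁ ≅ S₂ ≅ S. The number of ordered pairs (A,B) of subgroups of G with A ∩ B = 1 and A ⊔ B = G and A ≅ B ≅ S equals |Aut(S × S)| / |Aut(S)|². -/
open AddSubgroup

section aux

variable {G S : Type*} [AddCommGroup G] [AddCommGroup S]

/-- The canonical isomorphism `A × B ≃+ G` for complementary subgroups. -/
noncomputable def cpEquiv (A B : AddSubgroup G) (h : IsCompl A B) : (A × B) ≃+ G := by
  refine AddEquiv.ofBijective (A.subtype.coprod B.subtype) ⟨?_, ?_⟩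
  · rintro ⟨a₁, b₁⟩ ⟨a₂, b₂⟩ hx
    simp only [AddMonoidHom.coprod_apply, AddSubgroup.coe_subtype] at hx
    have hd : (a₁ : G) - a₂ = (b₂ : G) - b₁ := by
      rw [sub_eq_sub_iff_add_eq_add, hx, add_comm]
    have hmem : (a₁ : G) - a₂ ∈ A ⊓ B := by
      refine ⟨A.sub_mem a₁.2 a₂.2, ?_⟩
      rw [hd]; exact B.sub_mem b₂.2 b₁.2
    rw [h.inf_eq_bot, AddSubgroup.mem_bot, sub_eq_zero] at hmem
    have hb : (b₁ : G) = b₂ := by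
      have := hd
      rw [hmem, sub_self, eq_comm, sub_eq_zero] at this
      exact this.symm
    ext <;> simp [hmem, hb]
  · intro g
    have hg : g ∈ A ⊔ B := by rw [h.sup_eq_top]; trivial
    rw [AddSubgroup.mem_sup] at hg
    obtain ⟨a, ha, b, hb, hab⟩ := hg
    exact ⟨(⟨a, ha⟩, ⟨b, hb⟩), hab⟩

theorem cpEquiv_apply {A B : AddSubgroup G} (h : IsCompl A B) (x : A × B) :
    cpEquiv A B h x = (x.1 : G) + x.2 := rfl

theorem cpEquiv_symm_coe_left {A B : AddSubgroup G} (h : IsCompl A B) (a : A) :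
    (cpEquiv A B h).symm (a : G) = (a, 0) := by
  rw [AddEquiv.symm_apply_eq, cpEquiv_apply]; simp

theorem cpEquiv_symm_coe_right {A B : AddSubgroup G} (h : IsCompl A B) (b : B) :
    (cpEquiv A B h).symm (b : G) = (0, b) := by
  rw [AddEquiv.symm_apply_eq, cpEquiv_apply]; simp

theorem prodCongr_apply' {M N M' N' : Type*} [AddZeroClass M] [AddZeroClass N]
    [AddZeroClass M'] [AddZeroClass N'] (f : M ≃+ M') (g : N ≃+ N') (x : M × N) :
    AddEquiv.prodCongr f g x = (f x.1, g x.2) := rfl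

theorem addEquiv_ext {A B : AddSubgroup G} (hsup : A ⊔ B = ⊤) {f g : G ≃+ G}
    (hA : ∀ x ∈ A, f x = g x) (hB : ∀ x ∈ B, f x = g x) : f = g := by
  ext x
  have hx : x ∈ A ⊔ B := by rw [hsup]; trivial
  rw [AddSubgroup.mem_sup] at hx
  obtain ⟨a, ha, b, hb, rfl⟩ := hx
  rw [map_add, map_add, hA a ha, hB b hb]

end aux

theorem stmt5 (G S : Type*) [AddCommGroup G] [AddCommGroup S] [Finite G] [Finite S]
    (p : ℕ) (hp : p.Prime) (hG : ∃ n : ℕ, Nat.card G = p ^ n)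
    (S₁ S₂ : AddSubgroup G) (hinf : S₁ ⊓ S₂ = ⊥) (hsup : S₁ ⊔ S₂ = ⊤)
    (h₁ : Nonempty (S₁ ≃+ S)) (h₂ : Nonempty (S₂ ≃+ S)) :
    (Nat.card {AB : AddSubgroup G × AddSubgroup G |
        AB.1 ⊓ AB.2 = ⊥ ∧ AB.1 ⊔ AB.2 = ⊤ ∧
          Nonempty (AB.1 ≃+ S) ∧ Nonempty (AB.2 ≃+ S)} : ℚ) =
      (Nat.card (AddAut (S × S)) : ℚ) / (Nat.card (AddAut S)) ^ 2 := by
  classical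
  have hc0 : IsCompl S₁ S₂ := isCompl_iff.mpr ⟨disjoint_iff.mpr hinf, codisjoint_iff.mpr hsup⟩
  set X := {AB : AddSubgroup G × AddSubgroup G |
        AB.1 ⊓ AB.2 = ⊥ ∧ AB.1 ⊔ AB.2 = ⊤ ∧
          Nonempty (AB.1 ≃+ S) ∧ Nonempty (AB.2 ≃+ S)} with hX
  obtain ⟨v₁⟩ := h₁
  obtain ⟨v₂⟩ := h₂
  set u₁ : S ≃+ S₁ := v₁.symm with hu₁
  set u₂ : S ≃+ S₂ := v₂.symm with hu₂
  -- complement structure of a point of X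
  have hcx : ∀ x : X, IsCompl x.1.1 x.1.2 := fun x =>
    isCompl_iff.mpr ⟨disjoint_iff.mpr x.2.1, codisjoint_iff.mpr x.2.2.1⟩
  -- chosen isomorphisms
  let uA : ∀ x : X, S ≃+ x.1.1 := fun x => x.2.2.2.1.some.symm
  let uB : ∀ x : X, S ≃+ x.1.2 := fun x => x.2.2.2.2.some.symm
  -- the master map
  let F : X × (AddAut S × AddAut S) → AddAut G := fun y =>
    (cpEquiv S₁ S₂ hc0).symm.trans
      ((AddEquiv.prodCongr (u₁.symm.trans ((y.2.1 : S ≃+ S).trans (uA y.1)))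
          (u₂.symm.trans ((y.2.2 : S ≃+ S).trans (uB y.1)))).trans
        (cpEquiv y.1.1.1 y.1.1.2 (hcx y.1)))
  have Fap1 : ∀ (x : X) (α β : AddAut S) (a : S₁),
      (F (x, α, β) : G ≃+ G) (a : G) = ((uA x) (α (u₁.symm a)) : G) := by
    intro x α β a
    have y : X × (AddAut S × AddAut S) := (x, α, β)
    show (cpEquiv x.1.1 x.1.2 (hcx x))
        ((AddEquiv.prodCongr (u₁.symm.trans ((α : S ≃+ S).trans (uA x)))
          (u₂.symm.trans ((β : S ≃+ S).trans (uB x))))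
          ((cpEquiv S₁ S₂ hc0).symm (a : G))) = _
    rw [cpEquiv_symm_coe_left]
    simp [cpEquiv_apply, prodCongr_apply']
  have Fap2 : ∀ (x : X) (α β : AddAut S) (b : S₂),
      (F (x, α, β) : G ≃+ G) (b : G) = ((uB x) (β (u₂.symm b)) : G) := by
    intro x α β b
    have y : X × (AddAut S × AddAut S) := (x, α, β)
    show (cpEquiv x.1.1 x.1.2 (hcx x))
        ((AddEquiv.prodCongr (u₁.symm.trans ((α : S ≃+ S).trans (uA x)))
          (u₂.symm.trans ((β : S ≃+ S).trans (uB x))))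
          ((cpEquiv S₁ S₂ hc0).symm (b : G))) = _
    rw [cpEquiv_symm_coe_right]
    simp [cpEquiv_apply, prodCongr_apply']
  have Fmap1 : ∀ (x : X) (α β : AddAut S),
      AddSubgroup.map (F (x, α, β) : G ≃+ G).toAddMonoidHom S₁ = x.1.1 := by
    intro x α β
    ext g
    simp only [AddSubgroup.mem_map, AddMonoidHom.coe_coe]
    constructor
    · rintro ⟨a, ha, rfl⟩
      have := Fap1 x α β ⟨a, ha⟩
      simp only [AddEquiv.toAddMonoidHom_eq_coe, AddMonoidHom.coe_coe] at this ⊢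
      rw [this]
      exact ((uA x) (α (u₁.symm ⟨a, ha⟩))).2
    · intro hg
      refine ⟨(u₁ ((α : S ≃+ S).symm ((uA x).symm ⟨g, hg⟩)) : G), (u₁ _).2, ?_⟩
      have := Fap1 x α β (u₁ ((α : S ≃+ S).symm ((uA x).symm ⟨g, hg⟩)))
      simp only [AddEquiv.toAddMonoidHom_eq_coe, AddMonoidHom.coe_coe] at this ⊢
      rw [this]
      simp
  have Fmap2 : ∀ (x : X) (α β : AddAut S),
      AddSubgroup.map (F (x, α, β) : G ≃+ G).toAddMonoidHom S₂ = x.1.2 := by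
    intro x α β
    ext g
    simp only [AddSubgroup.mem_map, AddMonoidHom.coe_coe]
    constructor
    · rintro ⟨b, hb, rfl⟩
      have := Fap2 x α β ⟨b, hb⟩
      simp only [AddEquiv.toAddMonoidHom_eq_coe, AddMonoidHom.coe_coe] at this ⊢
      rw [this]
      exact ((uB x) (β (u₂.symm ⟨b, hb⟩))).2
    · intro hg
      refine ⟨(u₂ ((β : S ≃+ S).symm ((uB x).symm ⟨g, hg⟩)) : G), (u₂ _).2, ?_⟩
      have := Fap2 x α β (u₂ ((β : S ≃+ S).symm ((uB x).symm ⟨g, hg⟩)))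
      simp only [AddEquiv.toAddMonoidHom_eq_coe, AddMonoidHom.coe_coe] at this ⊢
      rw [this]
      simp
  have Finj : Function.Injective F := by
    rintro ⟨x, α, β⟩ ⟨x', α', β'⟩ h
    have hx : x = x' := by
      apply Subtype.ext
      have e1 : (x : AddSubgroup G × AddSubgroup G).1 = (x' : AddSubgroup G × AddSubgroup G).1 := by
        rw [← Fmap1 x α β, ← Fmap1 x' α' β', h]
      have e2 : (x : AddSubgroup G × AddSubgroup G).2 = (x' : AddSubgroup G × AddSubgroup G).2 := by
        rw [← Fmap2 x α β, ← Fmap2 x' α' β', h]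
      exact Prod.ext e1 e2
    subst hx
    have hα : α = α' := by
      apply AddEquiv.ext; intro s
      have e0 : ((uA x) (α (u₁.symm (u₁ s))) : G) = ((uA x) (α' (u₁.symm (u₁ s))) : G) := by
        rw [← Fap1 x α β (u₁ s), ← Fap1 x α' β' (u₁ s), h]
      have := (uA x).injective (Subtype.ext e0)
      simpa using this
    have hβ : β = β' := by
      apply AddEquiv.ext; intro s
      have e0 : ((uB x) (β (u₂.symm (u₂ s))) : G) = ((uB x) (β' (u₂.symm (u₂ s))) : G) := by
        rw [← Fap2 x α β (u₂ s), ← Fap2 x α' β' (u₂ s), h]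
      have := (uB x).injective (Subtype.ext e0)
      simpa using this
    rw [hα, hβ]
  have Fsurj : Function.Surjective F := by
    intro f
    set A : AddSubgroup G := AddSubgroup.map (f : G ≃+ G).toAddMonoidHom S₁ with hA
    set B : AddSubgroup G := AddSubgroup.map (f : G ≃+ G).toAddMonoidHom S₂ with hB
    have hfinj : Function.Injective (f : G ≃+ G).toAddMonoidHom := (f : G ≃+ G).injective
    have hABinf : A ⊓ B = ⊥ := by
      rw [hA, hB, ← AddSubgroup.map_inf _ _ _ hfinj, hinf]
      exact AddSubgroup.map_bot _
    have hABsup : A ⊔ B = ⊤ := by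
      rw [hA, hB, ← AddSubgroup.map_sup, hsup]
      exact AddSubgroup.map_top_of_surjective _ (f : G ≃+ G).surjective
    let isoA : S₁ ≃+ A := (f : G ≃+ G).addSubgroupMap S₁
    let isoB : S₂ ≃+ B := (f : G ≃+ G).addSubgroupMap S₂
    have hANE : Nonempty ((A : AddSubgroup G) ≃+ S) := ⟨isoA.symm.trans u₁.symm⟩
    have hBNE : Nonempty ((B : AddSubgroup G) ≃+ S) := ⟨isoB.symm.trans u₂.symm⟩
    let x : X := ⟨(A, B), hABinf, hABsup, hANE, hBNE⟩
    let α : AddAut S := u₁.trans (isoA.trans (uA x).symm)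
    let β : AddAut S := u₂.trans (isoB.trans (uB x).symm)
    refine ⟨(x, α, β), ?_⟩
    apply addEquiv_ext hsup
    · intro g hg
      have := Fap1 x α β ⟨g, hg⟩
      rw [this]
      show (((uA x) (α (u₁.symm ⟨g, hg⟩))) : G) = f g
      have : α (u₁.symm ⟨g, hg⟩) = (uA x).symm (isoA (u₁ (u₁.symm ⟨g, hg⟩))) := rfl
      rw [this]
      simp only [AddEquiv.apply_symm_apply]
      rfl
    · intro g hg
      have := Fap2 x α β ⟨g, hg⟩
      rw [this]
      show (((uB x) (β (u₂.symm ⟨g, hg⟩))) : G) = f g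
      have : β (u₂.symm ⟨g, hg⟩) = (uB x).symm (isoB (u₂ (u₂.symm ⟨g, hg⟩))) := rfl
      rw [this]
      simp only [AddEquiv.apply_symm_apply]
      rfl
  -- counting
  have hcard : Nat.card X * Nat.card (AddAut S) ^ 2 = Nat.card (AddAut G) := by
    have := Nat.card_congr (Equiv.ofBijective F ⟨Finj, Fsurj⟩)
    rw [Nat.card_prod, Nat.card_prod] at this
    rw [← this]; ring
  -- AddAut G ≃ AddAut (S × S)
  have e : G ≃+ S × S := (cpEquiv S₁ S₂ hc0).symm.trans (AddEquiv.prodCongr v₁ v₂)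
  have hAutG : Nat.card (AddAut G) = Nat.card (AddAut (S × S)) := by
    apply Nat.card_congr
    exact {
      toFun := fun f => e.symm.trans ((f : G ≃+ G).trans e)
      invFun := fun g => e.trans ((g : (S × S) ≃+ (S × S)).trans e.symm)
      left_inv := fun f => by apply AddEquiv.ext; intro x; simp [AddEquiv.trans_apply]
      right_inv := fun g => by apply AddEquiv.ext; intro x; simp [AddEquiv.trans_apply] }
  -- finiteness and positivity
  have hfinAut : Finite (AddAut S) :=
    Finite.of_injective (fun f : AddAut S => (f : S → S)) (fun f g h => by
      apply AddEquiv.ext; exact fun s => congrFun h s)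
  have hpos : 0 < Nat.card (AddAut S) := Nat.card_pos
  have hQ : (Nat.card X : ℚ) * (Nat.card (AddAut S) : ℚ) ^ 2
      = (Nat.card (AddAut (S × S)) : ℚ) := by
    rw [← hAutG, ← hcard]; push_cast; ring
  rw [eq_div_iff (by positivity)]
  exact hQ
end

section
/- Let G be a finite abelian p-group and S a finite abelian p-group. Then the number of pairs (H,K) of subgroups of G with H ≤ K and K/H ≅ S equals the sum over all subgroups T of G with T ≅ S of the number of subgroups of G/T. -/
/-!
Sorting the pairs `H ≤ K` by `K`, the left side is `∑ K, #{H ≤ K | K ⧸ H ≃ S}`. In a finite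
abelian group `K` the dual-subgroup map `H ↦ H^⊥ ≤ K̂` is a lattice anti-isomorphism with
`H^⊥ ≃ (K ⧸ H)^ ≃ K ⧸ H`, and `K̂ ≃ K`; hence `K` has as many subgroups with quotient `≃ S` as
subgroups `≃ S`. Sorting the resulting pairs `T ≤ K` with `T ≃ S` by `T` instead, and
identifying the subgroups above `T` with those of `G ⧸ T`, gives the right side.
-/

theorem Nat.card_subtype_prod_eq_sum_right {α β : Type*} [Finite α] [Fintype β]
    (R : α → β → Prop) :
    Nat.card {p : α × β // R p.1 p.2} = ∑ b, Nat.card {a // R a b} := by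
  rw [← Nat.card_sigma]
  exact Nat.card_congr (((Equiv.prodComm α β).subtypeEquiv fun _ => Iff.rfl).trans
    (Equiv.subtypeProdEquivSigmaSubtype fun b a => R a b))

theorem Nat.card_subtype_prod_eq_finsum_mem {α β : Type*} [Finite α] [Finite β]
    (P : α → Prop) (R : α → β → Prop) :
    Nat.card {p : α × β // P p.1 ∧ R p.1 p.2} = ∑ᶠ a ∈ {a | P a}, Nat.card {b // R a b} := by
  have := Fintype.ofFinite {a | P a}
  rw [← finsum_set_coe_eq_finsum_mem, finsum_eq_sum_of_fintype, ← Nat.card_sigma]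
  exact Nat.card_congr
    { toFun p := ⟨⟨p.1.1, p.2.1⟩, p.1.2, p.2.2⟩
      invFun s := ⟨(s.1.1, s.2.1), s.1.2, s.2.2⟩ }

@[to_additive]
theorem nonempty_mulEquiv_congr_left {A B S : Type*} [Mul A] [Mul B] [Mul S] (e : A ≃* B) :
    Nonempty (A ≃* S) ↔ Nonempty (B ≃* S) :=
  ⟨fun ⟨f⟩ => ⟨e.symm.trans f⟩, fun ⟨f⟩ => ⟨e.trans f⟩⟩

namespace CommGroup

variable {G : Type*} [CommGroup G] [Finite G]

theorem nonempty_subgroupOrderIsoSubgroupMonoidHom_mulEquiv_quotient (M : Type*) [CommMonoid M]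
    [hM : HasEnoughRootsOfUnity M (Monoid.exponent G)] (H : Subgroup G) :
    Nonempty ((subgroupOrderIsoSubgroupMonoidHom G M H).ofDual ≃* G ⧸ H) :=
  have := hM.of_dvd M (Group.exponent_quotient_dvd H)
  ⟨(MonoidHom.domRestrictHomKerEquiv Mˣ H).trans
    (monoidHom_mulEquiv_of_hasEnoughRootsOfUnity (G ⧸ H) M).some⟩

theorem card_subgroup_quotient_mulEquiv_eq_card_subgroup_mulEquiv (S : Type*) [Group S] :
    Nat.card {H : Subgroup G // Nonempty ((G ⧸ H) ≃* S)} =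
      Nat.card {H : Subgroup G // Nonempty (H ≃* S)} := by
  have : NeZero (Monoid.exponent G) := ⟨Monoid.exponent_ne_zero_of_finite⟩
  let e : (G →* ℂˣ) ≃* G := (monoidHom_mulEquiv_of_hasEnoughRootsOfUnity G ℂ).some
  let D := subgroupOrderIsoSubgroupMonoidHom G ℂ
  refine Nat.card_congr <| Equiv.subtypeEquiv
    ((D.toEquiv.trans OrderDual.ofDual).trans e.mapSubgroup.toEquiv) fun H => ?_
  obtain ⟨f⟩ := nonempty_subgroupOrderIsoSubgroupMonoidHom_mulEquiv_quotient ℂ H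
  exact nonempty_mulEquiv_congr_left (f.symm.trans (e.subgroupMap (D H).ofDual))

end CommGroup

namespace AddCommGroup

theorem card_addSubgroup_quotient_addEquiv_eq_card_addSubgroup_addEquiv
    (A : Type*) [AddCommGroup A] [Finite A] (S : Type*) [AddGroup S] :
    Nat.card {H : AddSubgroup A // Nonempty ((A ⧸ H) ≃+ S)} =
      Nat.card {H : AddSubgroup A // Nonempty (H ≃+ S)} := by
  refine (Nat.card_congr (Equiv.subtypeEquiv AddSubgroup.toSubgroup.toEquiv fun H => ?_)).trans
    ((CommGroup.card_subgroup_quotient_mulEquiv_eq_card_subgroup_mulEquiv (Multiplicative S)).trans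
      (Nat.card_congr (Equiv.subtypeEquiv AddSubgroup.toSubgroup.toEquiv fun H => ?_)).symm)
  -- `Multiplicative (A ⧸ H)` is definitionally `Multiplicative A ⧸ H.toSubgroup`, and
  -- `Multiplicative H` is definitionally `H.toSubgroup`.
  · exact AddEquiv.toMultiplicative.nonempty_congr
  · exact AddEquiv.toMultiplicative.nonempty_congr

end AddCommGroup

namespace AddSubgroup

variable {G : Type*} [AddCommGroup G]

theorem card_le_quotient_addEquiv_eq_card_le_addEquiv (K : AddSubgroup G) [Finite K]
    (S : Type*) [AddGroup S] :
    Nat.card {H : AddSubgroup G // H ≤ K ∧ Nonempty ((K ⧸ H.addSubgroupOf K) ≃+ S)} =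
      Nat.card {T : AddSubgroup G // Nonempty (T ≃+ S) ∧ T ≤ K} := by
  let E := MapSubtype.orderIso K
  calc _ = Nat.card {H : AddSubgroup K // Nonempty ((K ⧸ H) ≃+ S)} :=
        Nat.card_congr <| (Equiv.subtypeSubtypeEquivSubtypeInter (· ≤ K) _).symm.trans
          (E.symm.toEquiv.subtypeEquiv fun _ => Iff.rfl)
    _ = Nat.card {T : AddSubgroup K // Nonempty (T ≃+ S)} :=
        AddCommGroup.card_addSubgroup_quotient_addEquiv_eq_card_addSubgroup_addEquiv K S
    _ = _ := Nat.card_congr <|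
        (E.toEquiv.subtypeEquiv (q := fun T => Nonempty (T.1 ≃+ S)) fun T =>
          nonempty_addEquiv_congr_left (equivMapOfInjective T K.subtype K.subtype_injective)).trans
          ((Equiv.subtypeSubtypeEquivSubtypeInter (· ≤ K) fun T => Nonempty (T ≃+ S)).trans
            (Equiv.subtypeEquivRight fun _ => and_comm))

end AddSubgroup

theorem stmt7_general (G S : Type*) [AddCommGroup G] [AddCommGroup S] [Finite G] :
    Nat.card {HK : AddSubgroup G × AddSubgroup G |
        HK.1 ≤ HK.2 ∧ Nonempty ((HK.2 ⧸ HK.1.addSubgroupOf HK.2) ≃+ S)} =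
      ∑ᶠ T ∈ {T : AddSubgroup G | Nonempty (T ≃+ S)},
        Nat.card (AddSubgroup (G ⧸ T)) := by
  have := Fintype.ofFinite (AddSubgroup G)
  calc _ = ∑ K : AddSubgroup G,
        Nat.card {H : AddSubgroup G // H ≤ K ∧ Nonempty ((K ⧸ H.addSubgroupOf K) ≃+ S)} :=
        Nat.card_subtype_prod_eq_sum_right _
    _ = ∑ K : AddSubgroup G, Nat.card {T : AddSubgroup G // Nonempty (T ≃+ S) ∧ T ≤ K} :=
        Finset.sum_congr rfl fun K _ => K.card_le_quotient_addEquiv_eq_card_le_addEquiv S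
    _ = Nat.card {TK : AddSubgroup G × AddSubgroup G // Nonempty (TK.1 ≃+ S) ∧ TK.1 ≤ TK.2} :=
        (Nat.card_subtype_prod_eq_sum_right _).symm
    _ = ∑ᶠ T ∈ {T : AddSubgroup G | Nonempty (T ≃+ S)}, Nat.card {K : AddSubgroup G // T ≤ K} :=
        Nat.card_subtype_prod_eq_finsum_mem (fun T : AddSubgroup G => Nonempty (T ≃+ S)) (· ≤ ·)
    _ = _ := finsum_mem_congr rfl fun T _ =>
        Nat.card_congr (QuotientAddGroup.comapMk'OrderIso T).toEquiv.symm

theorem stmt7 (G S : Type*) [AddCommGroup G] [AddCommGroup S] [Finite G] [Finite S]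
    (p : ℕ) (hp : p.Prime)
    (hG : ∃ n : ℕ, Nat.card G = p ^ n) (hS : ∃ n : ℕ, Nat.card S = p ^ n) :
    Nat.card {HK : AddSubgroup G × AddSubgroup G |
        HK.1 ≤ HK.2 ∧ Nonempty ((HK.2 ⧸ HK.1.addSubgroupOf HK.2) ≃+ S)} =
      ∑ᶠ T ∈ {T : AddSubgroup G | Nonempty (T ≃+ S)},
        Nat.card (AddSubgroup (G ⧸ T)) :=
  stmt7_general G S
end

section
/- For a prime p and integers 0 ≤ α₁ ≤ α₂, the number of subgroups of ℤ_{p^α₁} × ℤ_{p^α₂} equals [(α₂−α₁+1)p^{α₁+2} − (α₂−α₁−1)p^{α₁+1} − (α₁+α₂+3)p + (α₁+α₂+1)] / (p−1)². -/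
/-!
A subgroup `H` of `ℤ/p^a × ℤ/p^b` is determined by its projection `⟨p^(a-u)⟩` to the first
factor (of order `p^u`), its intersection `⟨p^t⟩` with the second factor, and the second
coordinate `c` of one element `(p^(a-u), c) ∈ H`, which matters only modulo `p^t`. Since
`p^u • (p^(a-u), c)` lies in the second factor, `p^t ∣ p^u c`, so `c` ranges over
`p^(t-u) ℤ/p^t`: there are `p^min(t,u)` choices. Summing `p^min(t,u)` over `u ≤ a`, `t ≤ b`
is a geometric-sum computation.
-/

open AddSubgroup

namespace ZMod

theorem intCast_mem_zmultiples_natCast_iff {N k : ℕ} (hk : k ∣ N) (z : ℤ) :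
    (z : ZMod N) ∈ zmultiples (k : ZMod N) ↔ (k : ℤ) ∣ z := by
  constructor
  · rintro ⟨m, hm⟩
    have hN : (N : ℤ) ∣ z - m * k := by
      rw [← intCast_eq_intCast_iff_dvd_sub, ← hm]
      simp
    exact (dvd_sub_left (dvd_mul_left _ _)).1 ((Int.natCast_dvd_natCast.2 hk).trans hN)
  · rintro ⟨d, rfl⟩
    exact ⟨d, by simp [mul_comm]⟩

theorem natCast_mem_zmultiples_natCast_iff {N k : ℕ} (hk : k ∣ N) (n : ℕ) :
    (n : ZMod N) ∈ zmultiples (k : ZMod N) ↔ k ∣ n := by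
  simpa [Int.natCast_dvd_natCast] using intCast_mem_zmultiples_natCast_iff hk n

theorem exists_dvd_eq_zmultiples {N : ℕ} (H : AddSubgroup (ZMod N)) :
    ∃ d, d ∣ N ∧ H = zmultiples (d : ZMod N) := by
  obtain ⟨k, hk⟩ := Int.subgroup_cyclic (H.comap (Int.castAddHom (ZMod N)))
  rw [← zmultiples_eq_closure, ← Int.zmultiples_natAbs] at hk
  have hN : (N : ℤ) ∈ H.comap (Int.castAddHom (ZMod N)) := by simp
  rw [hk, Int.mem_zmultiples_iff] at hN
  refine ⟨k.natAbs, Int.natCast_dvd_natCast.1 hN, ?_⟩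
  rw [← map_comap_eq_self_of_surjective (f := Int.castAddHom (ZMod N)) intCast_surjective H, hk,
    AddMonoidHom.map_zmultiples]
  simp

theorem exists_pow_eq_zmultiples {p : ℕ} (hp : p.Prime) {n : ℕ}
    (H : AddSubgroup (ZMod (p ^ n))) :
    ∃ s ≤ n, H = zmultiples ((p ^ s : ℕ) : ZMod (p ^ n)) := by
  obtain ⟨d, hd, hH⟩ := exists_dvd_eq_zmultiples H
  obtain ⟨s, hs, rfl⟩ := (Nat.dvd_prime_pow hp).1 hd
  exact ⟨s, hs, hH⟩

theorem addOrderOf_natCast_pow {p : ℕ} (hp : 0 < p) {n s : ℕ} (hs : s ≤ n) :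
    addOrderOf ((p ^ s : ℕ) : ZMod (p ^ n)) = p ^ (n - s) := by
  rw [addOrderOf_coe _ (pow_pos hp n).ne', Nat.gcd_eq_right (pow_dvd_pow p hs), Nat.pow_div hs hp]

theorem zmultiples_natCast_pow_injOn {p : ℕ} (hp : 1 < p) {n s s' : ℕ} (hs : s ≤ n)
    (hs' : s' ≤ n)
    (h : zmultiples ((p ^ s : ℕ) : ZMod (p ^ n)) = zmultiples ((p ^ s' : ℕ) : ZMod (p ^ n))) :
    s = s' := by
  have hcard := congrArg (fun K : AddSubgroup _ => Nat.card K) h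
  simp only [Nat.card_zmultiples, addOrderOf_natCast_pow (zero_lt_one.trans hp) hs,
    addOrderOf_natCast_pow (zero_lt_one.trans hp) hs'] at hcard
  have := Nat.pow_right_injective hp hcard
  omega

end ZMod

theorem Nat.pow_sub_dvd_of_pow_dvd_mul {p t u v : ℕ} (hp : 0 < p) (h : p ^ t ∣ p ^ u * v) :
    p ^ (t - u) ∣ v := by
  rcases le_total t u with htu | hut
  · simp [Nat.sub_eq_zero_of_le htu]
  · obtain ⟨d, rfl⟩ := Nat.exists_eq_add_of_le hut
    rw [pow_add] at h
    simpa using Nat.dvd_of_mul_dvd_mul_left (pow_pos hp u) h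

section ClosurePair

variable {A B : Type*} [AddCommGroup A] [AddCommGroup B] {g : A} {c e : B}

theorem map_fst_closure_pair :
    (closure {(g, c), (0, e)}).map (AddMonoidHom.fst A B) = zmultiples g := by
  rw [AddMonoidHom.map_closure, Set.image_pair, zmultiples_eq_closure]
  simp [Set.pair_comm, closure_insert_zero]

theorem comap_inr_closure_pair (hc : ∀ m : ℤ, m • g = 0 → m • c ∈ zmultiples e) :
    (closure {(g, c), (0, e)}).comap (AddMonoidHom.inr A B) = zmultiples e := by
  refine le_antisymm (fun y hy => ?_) (zmultiples_le.2 (subset_closure (by simp)))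
  obtain ⟨m, n, hmn⟩ := mem_closure_pair.1 hy
  simp only [AddMonoidHom.inr_apply, Prod.ext_iff, Prod.fst_add, Prod.snd_add, Prod.smul_fst,
    Prod.smul_snd, smul_zero, add_zero] at hmn
  rw [← hmn.2]
  exact add_mem (hc m hmn.1) (zsmul_mem (mem_zmultiples e) n)

theorem zsmul_mem_zmultiples_of_mem {H : AddSubgroup (A × B)} (hgc : (g, c) ∈ H)
    (hH : H.comap (AddMonoidHom.inr A B) = zmultiples e) (m : ℤ) (hm : m • g = 0) :
    m • c ∈ zmultiples e := by
  rw [← hH, mem_comap, AddMonoidHom.inr_apply]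
  simpa [hm] using zsmul_mem hgc m

theorem eq_closure_pair {H : AddSubgroup (A × B)}
    (hfst : H.map (AddMonoidHom.fst A B) = zmultiples g)
    (hinr : H.comap (AddMonoidHom.inr A B) = zmultiples e) (hgc : (g, c) ∈ H) :
    H = closure {(g, c), (0, e)} := by
  have he : ((0 : A), e) ∈ H := by
    simpa using (hinr.ge (mem_zmultiples e) : e ∈ H.comap (AddMonoidHom.inr A B))
  refine le_antisymm (fun x hx => ?_) ((closure_le H).2 (by simp [Set.insert_subset_iff, hgc, he]))
  obtain ⟨m, hm⟩ : x.1 ∈ zmultiples g := hfst ▸ mem_map_of_mem _ hx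
  obtain ⟨n, hn⟩ : x.2 - m • c ∈ zmultiples e := by
    rw [← hinr, mem_comap, AddMonoidHom.inr_apply]
    convert H.sub_mem hx (zsmul_mem hgc m) using 1
    ext <;> simp [hm]
  refine mem_closure_pair.2 ⟨m, n, ?_⟩
  ext <;> simp [hm, hn]

theorem sub_mem_zmultiples_of_closure_pair_eq {c' : B}
    (hc' : ∀ m : ℤ, m • g = 0 → m • c' ∈ zmultiples e)
    (h : closure {(g, c), (0, e)} = closure {(g, c'), (0, e)}) : c - c' ∈ zmultiples e := by
  rw [← comap_inr_closure_pair hc', mem_comap, AddMonoidHom.inr_apply, ← h]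
  convert sub_mem (subset_closure (by simp) : (g, c) ∈ closure {(g, c), (0, e)})
    (h ▸ subset_closure (by simp) : (g, c') ∈ closure {(g, c), (0, e)}) using 1
  simp

end ClosurePair

section HermiteNormalForm

variable {p a b : ℕ}

/-- Hermite normal form: `p ^ u` is the order of the projection to the first factor and `p ^ t`
generates the intersection with the second factor. -/
def hnfSubgroup (p a b u t j : ℕ) : AddSubgroup (ZMod (p ^ a) × ZMod (p ^ b)) :=
  closure {(((p ^ (a - u) : ℕ) : ZMod (p ^ a)), ((p ^ (t - u) * j : ℕ) : ZMod (p ^ b))),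
    (0, ((p ^ t : ℕ) : ZMod (p ^ b)))}

theorem zsmul_natCast_pow_eq_zero_iff (hp : 0 < p) {u : ℕ} (hu : u ≤ a) (m : ℤ) :
    m • ((p ^ (a - u) : ℕ) : ZMod (p ^ a)) = 0 ↔ ((p ^ u : ℕ) : ℤ) ∣ m := by
  rw [← addOrderOf_dvd_iff_zsmul_eq_zero, ZMod.addOrderOf_natCast_pow hp (Nat.sub_le a u),
    Nat.sub_sub_self hu]

theorem hnf_zsmul_mem_zmultiples (hp : 0 < p) {u t : ℕ} (hu : u ≤ a) (ht : t ≤ b) (j : ℕ)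
    (m : ℤ) (hm : m • ((p ^ (a - u) : ℕ) : ZMod (p ^ a)) = 0) :
    m • ((p ^ (t - u) * j : ℕ) : ZMod (p ^ b)) ∈
      zmultiples ((p ^ t : ℕ) : ZMod (p ^ b)) := by
  obtain ⟨m, rfl⟩ := (zsmul_natCast_pow_eq_zero_iff hp hu m).1 hm
  rw [mul_comm, mul_zsmul]
  refine zsmul_mem ?_ m
  rw [natCast_zsmul, nsmul_eq_mul, ← Nat.cast_mul,
    ZMod.natCast_mem_zmultiples_natCast_iff (pow_dvd_pow p ht), ← mul_assoc, ← pow_add]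
  exact (pow_dvd_pow p (by omega)).mul_right j

theorem hnfSubgroup_injOn (hp : 1 < p) {u u' t t' j j' : ℕ} (hu : u ≤ a) (hu' : u' ≤ a)
    (ht : t ≤ b) (ht' : t' ≤ b) (hj : j < p ^ min t u) (hj' : j' < p ^ min t' u')
    (h : hnfSubgroup p a b u t j = hnfSubgroup p a b u' t' j') : u = u' ∧ t = t' ∧ j = j' := by
  have hp0 : 0 < p := zero_lt_one.trans hp
  obtain rfl : u = u' := by
    have := congrArg (map (AddMonoidHom.fst _ _)) h
    simp only [hnfSubgroup, map_fst_closure_pair] at this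
    have := ZMod.zmultiples_natCast_pow_injOn hp (Nat.sub_le a u) (Nat.sub_le a u') this
    omega
  obtain rfl : t = t' := by
    have := congrArg (comap (AddMonoidHom.inr _ _)) h
    simp only [hnfSubgroup] at this
    rw [comap_inr_closure_pair (hnf_zsmul_mem_zmultiples hp0 hu ht j),
      comap_inr_closure_pair (hnf_zsmul_mem_zmultiples hp0 hu ht' j')] at this
    exact ZMod.zmultiples_natCast_pow_injOn hp ht ht' this
  refine ⟨rfl, rfl, ?_⟩
  have hsub := sub_mem_zmultiples_of_closure_pair_eq (hnf_zsmul_mem_zmultiples hp0 hu ht j') h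
  rw [show ((p ^ (t - u) * j : ℕ) : ZMod (p ^ b)) - ((p ^ (t - u) * j' : ℕ) : ZMod (p ^ b)) =
      ((p ^ (t - u) * ((j : ℤ) - j') : ℤ) : ZMod (p ^ b)) by push_cast; ring,
    ZMod.intCast_mem_zmultiples_natCast_iff (pow_dvd_pow p ht)] at hsub
  have hpt : ((p ^ t : ℕ) : ℤ) = ((p ^ (t - u) : ℕ) : ℤ) * ((p ^ min t u : ℕ) : ℤ) := by
    rw [← Nat.cast_mul, ← pow_add]
    congr 2
    omega
  rw [hpt] at hsub
  have hpow : ((p ^ (t - u) : ℕ) : ℤ) ≠ 0 := by positivity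
  have hmod : j' ≡ j [MOD p ^ min t u] := Nat.modEq_iff_dvd.2 ((mul_dvd_mul_iff_left hpow).1 hsub)
  exact (hmod.eq_of_lt_of_lt hj' hj).symm

theorem exists_hnfSubgroup_eq (hp : p.Prime) (H : AddSubgroup (ZMod (p ^ a) × ZMod (p ^ b))) :
    ∃ u ≤ a, ∃ t ≤ b, ∃ j < p ^ min t u, hnfSubgroup p a b u t j = H := by
  have : NeZero (p ^ b) := ⟨pow_ne_zero b hp.ne_zero⟩
  obtain ⟨s, hs, hfst⟩ := ZMod.exists_pow_eq_zmultiples hp (H.map (AddMonoidHom.fst _ _))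
  obtain ⟨t, ht, hinr⟩ := ZMod.exists_pow_eq_zmultiples hp (H.comap (AddMonoidHom.inr _ _))
  obtain ⟨u, hu, rfl⟩ : ∃ u ≤ a, s = a - u := ⟨a - s, Nat.sub_le a s, by omega⟩
  have hg : ((p ^ (a - u) : ℕ) : ZMod (p ^ a)) ∈ H.map (AddMonoidHom.fst _ _) :=
    hfst ▸ mem_zmultiples _
  obtain ⟨⟨_, x⟩, hx, rfl⟩ := mem_map.1 hg
  -- `p ^ u • (p ^ (a - u), x) = (0, p ^ u • x) ∈ H`, so `p ^ t ∣ p ^ u * x`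
  obtain ⟨k, hk⟩ : p ^ (t - u) ∣ x.val := by
    have := zsmul_mem_zmultiples_of_mem hx hinr ((p ^ u : ℕ) : ℤ)
      ((zsmul_natCast_pow_eq_zero_iff hp.pos hu _).2 dvd_rfl)
    rw [← ZMod.natCast_zmod_val x, natCast_zsmul, nsmul_eq_mul, ← Nat.cast_mul,
      ZMod.natCast_mem_zmultiples_natCast_iff (pow_dvd_pow p ht)] at this
    exact Nat.pow_sub_dvd_of_pow_dvd_mul hp.pos this
  refine ⟨u, hu, t, ht, k % p ^ min t u, Nat.mod_lt _ (pow_pos hp.pos _), ?_⟩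
  have hsplit : x = ((p ^ t * (k / p ^ min t u) : ℕ) : ZMod (p ^ b)) +
      ((p ^ (t - u) * (k % p ^ min t u) : ℕ) : ZMod (p ^ b)) := by
    rw [← Nat.cast_add, ← ZMod.natCast_zmod_val x, hk]
    conv_lhs => rw [← Nat.div_add_mod k (p ^ min t u)]
    rw [mul_add, ← mul_assoc, ← pow_add, show t - u + min t u = t by omega]
  have hq : ((0 : ZMod (p ^ a)), ((p ^ t * (k / p ^ min t u) : ℕ) : ZMod (p ^ b))) ∈ H := by
    have : ((p ^ t * (k / p ^ min t u) : ℕ) : ZMod (p ^ b)) ∈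
        H.comap (AddMonoidHom.inr _ _) := by
      rw [hinr, ZMod.natCast_mem_zmultiples_natCast_iff (pow_dvd_pow p ht)]
      exact dvd_mul_right _ _
    simpa using this
  refine (eq_closure_pair hfst hinr ?_).symm
  convert H.sub_mem hx hq using 1
  rw [hsplit]
  ext <;> simp

theorem card_addSubgroup_prod_zmod_pow (hp : p.Prime) :
    Nat.card (AddSubgroup (ZMod (p ^ a) × ZMod (p ^ b))) =
      ∑ u ∈ Finset.range (a + 1), ∑ t ∈ Finset.range (b + 1), p ^ min t u := by
  let hnf : (Σ u : Fin (a + 1), Σ t : Fin (b + 1), Fin (p ^ min (t : ℕ) u)) → AddSubgroup _ :=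
    fun x => hnfSubgroup p a b x.1 x.2.1 x.2.2
  have hbij : Function.Bijective hnf := by
    refine ⟨fun ⟨u, t, j⟩ ⟨u', t', j'⟩ h => ?_, fun H => ?_⟩
    · obtain ⟨hu, ht, hj⟩ := hnfSubgroup_injOn hp.one_lt (by omega) (by omega) (by omega)
        (by omega) j.2 j'.2 h
      obtain rfl := Fin.ext hu
      obtain rfl := Fin.ext ht
      obtain rfl := Fin.ext hj
      rfl
    · obtain ⟨u, hu, t, ht, j, hj, rfl⟩ := exists_hnfSubgroup_eq hp H
      exact ⟨⟨⟨u, by omega⟩, ⟨t, by omega⟩, ⟨j, hj⟩⟩, rfl⟩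
  rw [← Nat.card_congr (Equiv.ofBijective hnf hbij), Nat.card_eq_fintype_card]
  simp [Fintype.card_sigma, Finset.sum_range]

end HermiteNormalForm

theorem sum_range_pow_min {R : Type*} [CommSemiring R] (x : R) {b u : ℕ} (hu : u ≤ b + 1) :
    ∑ t ∈ Finset.range (b + 1), x ^ min t u =
      ∑ t ∈ Finset.range u, x ^ t + (b + 1 - u) • x ^ u := by
  rw [← Finset.sum_range_add_sum_Ico _ hu]
  congr 1
  · exact Finset.sum_congr rfl fun t ht => by rw [min_eq_left (Finset.mem_range.1 ht).le]
  · rw [Finset.sum_congr rfl fun t ht => by rw [min_eq_right (Finset.mem_Ico.1 ht).1],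
      Finset.sum_const, Nat.card_Ico]

theorem sub_one_sq_mul_sum_sum_pow_min {R : Type*} [CommRing R] (x : R) {a b : ℕ}
    (hab : a ≤ b) :
    (x - 1) ^ 2 * ∑ u ∈ Finset.range (a + 1), ∑ t ∈ Finset.range (b + 1), x ^ min t u =
      ((b : R) - a + 1) * x ^ (a + 2) - ((b : R) - a - 1) * x ^ (a + 1) -
        ((a : R) + b + 3) * x + ((a : R) + b + 1) := by
  induction a with
  | zero =>
    rw [zero_add, Finset.sum_range_one, sum_range_pow_min x (by omega), Finset.sum_range_zero,
      nsmul_eq_mul]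
    push_cast
    ring
  | succ a ih =>
    have hgeom := geom_sum_mul x (a + 1)
    rw [Finset.sum_range_succ, mul_add, ih (by omega), sum_range_pow_min x (by omega), nsmul_eq_mul,
      Nat.cast_sub (by omega)]
    push_cast
    linear_combination (x - 1) * hgeom

theorem stmt13 (p α₁ α₂ : ℕ) (hp : p.Prime) (h : α₁ ≤ α₂) :
    ((p : ℤ) - 1) ^ 2 * Nat.card (AddSubgroup (ZMod (p ^ α₁) × ZMod (p ^ α₂))) =
      ((α₂ : ℤ) - α₁ + 1) * p ^ (α₁ + 2) - ((α₂ : ℤ) - α₁ - 1) * p ^ (α₁ + 1) -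
        ((α₁ : ℤ) + α₂ + 3) * p + ((α₁ : ℤ) + α₂ + 1) := by
  rw [card_addSubgroup_prod_zmod_pow hp]
  push_cast
  exact sub_one_sq_mul_sum_sum_pow_min (p : ℤ) h
end

section
/- For a prime p and 1 ≤ i ≤ α₁ ≤ α₂, the group ℤ_{p^α₁} × ℤ_{p^α₂} has exactly one subgroup isomorphic to ℤ_{p^i} × ℤ_{p^i}, and the quotient by this subgroup is isomorphic to ℤ_{p^{α₁−i}} × ℤ_{p^{α₂−i}}. -/
section helpers

variable {p : ℕ}

/-- The cast hom `ZMod (p^α) →+ ZMod (p^(α-i))`. -/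
private def castf (p i α : ℕ) : ZMod (p ^ α) →+ ZMod (p ^ (α - i)) :=
  (ZMod.castHom (pow_dvd_pow p (Nat.sub_le α i)) (ZMod (p ^ (α - i)))).toAddMonoidHom

private lemma castf_natCast (p i α k : ℕ) : castf p i α (k : ZMod (p ^ α)) = (k : ZMod (p ^ (α - i))) :=
  map_natCast (ZMod.castHom (pow_dvd_pow p (Nat.sub_le α i)) (ZMod (p ^ (α - i)))) k

private lemma castf_surj (hp : p.Prime) (i α : ℕ) : Function.Surjective (castf p i α) := by
  haveI : NeZero (p ^ (α - i)) := ⟨pow_ne_zero _ hp.pos.ne'⟩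
  intro y
  obtain ⟨k, rfl⟩ := ZMod.natCast_zmod_surjective y
  exact ⟨(k : ZMod (p ^ α)), castf_natCast p i α k⟩

private lemma mem_ker_castf (hp : p.Prime) {i α : ℕ} (h : i ≤ α) (x : ZMod (p ^ α)) :
    x ∈ (castf p i α).ker ↔ p ^ i • x = 0 := by
  haveI : NeZero (p ^ α) := ⟨pow_ne_zero _ hp.pos.ne'⟩
  have hx : x = ((x.val : ℕ) : ZMod (p ^ α)) := by
    simp [ZMod.natCast_val, ZMod.cast_id]
  have hmul : p ^ i * p ^ (α - i) = p ^ α := by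
    rw [← pow_add, Nat.add_sub_cancel' h]
  constructor
  · intro hk
    rw [AddMonoidHom.mem_ker] at hk
    rw [hx, castf_natCast, ZMod.natCast_eq_zero_iff] at hk
    obtain ⟨c, hc⟩ := hk
    rw [hx, ← Nat.cast_smul_eq_nsmul (ZMod (p ^ α)), smul_eq_mul, ← Nat.cast_mul, hc,
      ← mul_assoc, hmul, ZMod.natCast_eq_zero_iff]
    exact Dvd.intro c rfl
  · intro hk
    rw [AddMonoidHom.mem_ker, hx, castf_natCast, ZMod.natCast_eq_zero_iff]
    rw [hx, ← Nat.cast_smul_eq_nsmul (ZMod (p ^ α)), smul_eq_mul, ← Nat.cast_mul,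
      ZMod.natCast_eq_zero_iff] at hk
    have h2 : p ^ i * p ^ (α - i) ∣ p ^ i * x.val := by rw [hmul]; exact hk
    exact (mul_dvd_mul_iff_left (a := p ^ i) (pow_ne_zero _ hp.pos.ne')).mp h2

/-- map `ZMod (p^i) →+ ZMod (p^α)` sending 1 to `p^(α-i)`. -/
private noncomputable def gmap (p i α : ℕ) : ZMod (p ^ i) →+ ZMod (p ^ α) :=
  ZMod.lift (p ^ i) ⟨zmultiplesHom (ZMod (p ^ α)) ((p ^ (α - i) : ℕ) : ZMod (p ^ α)), by
    rw [zmultiplesHom_apply, zsmul_eq_mul]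
    have : ((p ^ i : ℕ) : ZMod (p ^ α)) * ((p ^ (α - i) : ℕ) : ZMod (p ^ α))
        = (((p ^ i * p ^ (α - i) : ℕ)) : ZMod (p ^ α)) := by push_cast; ring
    rw [Int.cast_natCast, this, ZMod.natCast_eq_zero_iff, ← pow_add]
    exact pow_dvd_pow p (by omega)⟩

private lemma gmap_natCast (p i α k : ℕ) :
    gmap p i α (k : ZMod (p ^ i)) = ((k * p ^ (α - i) : ℕ) : ZMod (p ^ α)) := by
  have : ((k : ℕ) : ZMod (p ^ i)) = ((k : ℤ) : ZMod (p ^ i)) := by push_cast; ring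
  rw [this, gmap, ZMod.lift_coe, zmultiplesHom_apply, zsmul_eq_mul]
  push_cast; ring


private lemma gmap_inj (hp : p.Prime) {i α : ℕ} (h : i ≤ α) :
    Function.Injective (gmap p i α) := by
  haveI : NeZero (p ^ i) := ⟨pow_ne_zero _ hp.pos.ne'⟩
  rw [injective_iff_map_eq_zero]
  intro x hx
  obtain ⟨k, rfl⟩ := ZMod.natCast_zmod_surjective x
  rw [gmap_natCast, ZMod.natCast_eq_zero_iff] at hx
  have hmul : p ^ i * p ^ (α - i) = p ^ α := by rw [← pow_add, Nat.add_sub_cancel' h]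
  rw [← hmul, mul_comm (p ^ i), mul_comm k] at hx
  have : p ^ i ∣ k :=
    (mul_dvd_mul_iff_left (a := p ^ (α - i)) (pow_ne_zero _ hp.pos.ne')).mp hx
  rw [ZMod.natCast_eq_zero_iff]
  exact this

private lemma gmap_range (hp : p.Prime) {i α : ℕ} (h : i ≤ α) :
    (gmap p i α).range = (castf p i α).ker := by
  haveI : NeZero (p ^ i) := ⟨pow_ne_zero _ hp.pos.ne'⟩
  haveI : NeZero (p ^ α) := ⟨pow_ne_zero _ hp.pos.ne'⟩
  have hmul : p ^ i * p ^ (α - i) = p ^ α := by rw [← pow_add, Nat.add_sub_cancel' h]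
  ext x
  rw [AddMonoidHom.mem_range, mem_ker_castf hp h]
  constructor
  · rintro ⟨y, rfl⟩
    obtain ⟨k, rfl⟩ := ZMod.natCast_zmod_surjective y
    rw [gmap_natCast, ← Nat.cast_smul_eq_nsmul (ZMod (p ^ α)), smul_eq_mul, ← Nat.cast_mul,
      ZMod.natCast_eq_zero_iff, ← hmul]
    exact ⟨k, by ring⟩
  · intro hx
    have hx' : x = ((x.val : ℕ) : ZMod (p ^ α)) := by simp [ZMod.natCast_val, ZMod.cast_id]
    rw [hx', ← Nat.cast_smul_eq_nsmul (ZMod (p ^ α)), smul_eq_mul, ← Nat.cast_mul,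
      ZMod.natCast_eq_zero_iff] at hx
    have : p ^ (α - i) ∣ x.val := by
      have h2 : p ^ i * p ^ (α - i) ∣ p ^ i * x.val := by rw [hmul]; exact hx
      exact (mul_dvd_mul_iff_left (a := p ^ i) (pow_ne_zero _ hp.pos.ne')).mp h2
    obtain ⟨c, hc⟩ := this
    exact ⟨(c : ZMod (p ^ i)), by rw [gmap_natCast, hx', hc]; ring_nf⟩

/-- `ZMod (p^i)` is isomorphic to the kernel of the cast map. -/
private noncomputable def kerEquiv (hp : p.Prime) {i α : ℕ} (h : i ≤ α) :
    ZMod (p ^ i) ≃+ (castf p i α).ker :=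
  (AddMonoidHom.ofInjective (gmap_inj hp h)).trans
    (AddEquiv.addSubgroupCongr (gmap_range hp h))


private lemma ker_prodMap' {A B C D : Type*} [AddGroup A] [AddGroup B] [AddGroup C] [AddGroup D]
    (f : A →+ C) (g : B →+ D) : (f.prodMap g).ker = f.ker.prod g.ker := by
  ext x
  have : (f.prodMap g) x = (f x.1, g x.2) := rfl
  rw [AddMonoidHom.mem_ker, this, AddSubgroup.mem_prod, AddMonoidHom.mem_ker,
    AddMonoidHom.mem_ker, Prod.ext_iff]
  rfl

end helpers

theorem stmt14 (p i α₁ α₂ : ℕ) (hp : p.Prime) (hi : 1 ≤ i) (h₁ : i ≤ α₁)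
    (h₂ : α₁ ≤ α₂) :
    (∃! H : AddSubgroup (ZMod (p ^ α₁) × ZMod (p ^ α₂)),
        Nonempty (H ≃+ ZMod (p ^ i) × ZMod (p ^ i))) ∧
      ∀ H : AddSubgroup (ZMod (p ^ α₁) × ZMod (p ^ α₂)),
        Nonempty (H ≃+ ZMod (p ^ i) × ZMod (p ^ i)) →
          Nonempty (((ZMod (p ^ α₁) × ZMod (p ^ α₂)) ⧸ H) ≃+
            ZMod (p ^ (α₁ - i)) × ZMod (p ^ (α₂ - i))) := by
  have hi₂ : i ≤ α₂ := h₁.trans h₂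
  haveI : NeZero (p ^ α₁) := ⟨pow_ne_zero _ hp.pos.ne'⟩
  haveI : NeZero (p ^ α₂) := ⟨pow_ne_zero _ hp.pos.ne'⟩
  haveI : NeZero (p ^ i) := ⟨pow_ne_zero _ hp.pos.ne'⟩
  set F := AddMonoidHom.prodMap (castf p i α₁) (castf p i α₂) with hF
  -- the canonical subgroup
  have hmem : ∀ x : ZMod (p ^ α₁) × ZMod (p ^ α₂), x ∈ F.ker ↔ p ^ i • x = 0 := by
    intro x
    have hFx : F x = (castf p i α₁ x.1, castf p i α₂ x.2) := rfl
    rw [AddMonoidHom.mem_ker, hFx, Prod.ext_iff, Prod.ext_iff]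
    simp only [Prod.fst_zero, Prod.snd_zero, Prod.smul_fst, Prod.smul_snd]
    rw [← AddMonoidHom.mem_ker, ← AddMonoidHom.mem_ker, mem_ker_castf hp h₁,
      mem_ker_castf hp hi₂]
  have e₀ : F.ker ≃+ ZMod (p ^ i) × ZMod (p ^ i) :=
    ((AddEquiv.addSubgroupCongr (ker_prodMap' _ _)).trans
      (AddSubgroup.prodEquiv _ _)).trans
      (AddEquiv.prodCongr (kerEquiv hp h₁).symm (kerEquiv hp hi₂).symm)
  have hcard₀ : Nat.card F.ker = p ^ i * p ^ i := by
    rw [Nat.card_congr e₀.toEquiv, Nat.card_prod, Nat.card_zmod]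
  -- every element of the model group is killed by p^i
  have hkill : ∀ y : ZMod (p ^ i) × ZMod (p ^ i), p ^ i • y = 0 := by
    intro y
    have h1 : p ^ i • y.1 = 0 := by
      rw [← Nat.cast_smul_eq_nsmul (ZMod (p ^ i)), ZMod.natCast_self, zero_smul]
    have h2 : p ^ i • y.2 = 0 := by
      rw [← Nat.cast_smul_eq_nsmul (ZMod (p ^ i)), ZMod.natCast_self, zero_smul]
    exact Prod.ext h1 h2
  -- uniqueness
  have huniq : ∀ H : AddSubgroup (ZMod (p ^ α₁) × ZMod (p ^ α₂)),
      Nonempty (H ≃+ ZMod (p ^ i) × ZMod (p ^ i)) → H = F.ker := by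
    rintro H ⟨e⟩
    have hle : H ≤ F.ker := by
      intro x hx
      rw [hmem]
      have hz : p ^ i • (⟨x, hx⟩ : H) = 0 := by
        apply e.injective
        rw [map_nsmul, map_zero]
        exact hkill _
      have := congrArg (Subtype.val) hz
      simpa using this
    have hcard : Nat.card H = p ^ i * p ^ i := by
      rw [Nat.card_congr e.toEquiv, Nat.card_prod, Nat.card_zmod]
    exact AddSubgroup.eq_of_le_of_card_ge hle (by rw [hcard, hcard₀])
  have hsurj : Function.Surjective F := by
    have : ⇑F = Prod.map (castf p i α₁) (castf p i α₂) := rfl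
    rw [this]
    exact (castf_surj hp i α₁).prodMap (castf_surj hp i α₂)
  refine ⟨⟨F.ker, ⟨e₀⟩, fun H hH => huniq H hH⟩, fun H hH => ?_⟩
  rw [huniq H hH]
  exact ⟨QuotientAddGroup.quotientKerEquivOfSurjective F hsurj⟩
end
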